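/- Let r ≥ 2, let d_{r}(m) = Σ_j j!(r−1)^j C(m,j)^2, and let p_n = |E_n^r((1^(1),2^(1)), (2^(1),1^(2)))|. Then p_n satisfies the recurrence p_n = n(r−1) p_{n−1} + Σ_{i=1}^n C(n−1, i−1) (n−i)! (r−1)^{n−i} d_{r−1}(i−1) for n ≥ 1, with p_0 = 1. -/

import Mathlib

open Finset Equiv

/-- A signed permutation of length `n` with `r` signs: a permutation of `Fin n`
together with a sign in `Fin r` attached to each position. -/
abbrev SignedPerm (n r : ℕ) := Equiv.Perm (Fin n) × (Fin n → Fin r)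

/-- `SPContains p x` : the signed permutation `x` contains the signed pattern `p`,
i.e. there is an increasing sequence of positions on which the symbols of `x` are
order-isomorphic to the symbols of `p` and the signs match exactly. -/
def SPContains {k n r : ℕ} (p : SignedPerm k r) (x : SignedPerm n r) : Prop :=
  ∃ f : Fin k → Fin n, StrictMono f ∧
    (∀ i j : Fin k, p.1 i < p.1 j ↔ x.1 (f i) < x.1 (f j)) ∧
    (∀ i : Fin k, x.2 (f i) = p.2 i)

/-- Classical (unsigned) pattern containment for permutations. -/
def PContains {k m : ℕ} (τ : Equiv.Perm (Fin k)) (σ : Equiv.Perm (Fin m)) : Prop :=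
  ∃ f : Fin k → Fin m, StrictMono f ∧ ∀ i j : Fin k, τ i < τ j ↔ σ (f i) < σ (f j)

/-!
Sort the avoiders of length `m + 1` by the position `t` of their largest entry (signs are
counted from `0`). If that entry has a sign other than `0`, it can take part in neither pattern,
and deleting it leaves an arbitrary avoider of length `m`: this gives `(m + 1)(r - 1) p_m`. If
it has sign `0`, then no earlier entry may have sign `0` and no later entry sign `1`, and all
that remains of the two patterns is that the entries of sign `0` decrease. Choosing the `s`
positions of sign `0` among the `m - t` positions after `t`, the other signs in
`(r - 1)^t (r - 2)^(m - t - s)` ways and a permutation decreasing on the chosen positions in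
`m! / s!` ways, and substituting `i = m + 1 - t`, gives the second term.
-/

open scoped Nat

section StrictAntiPerms

variable {α : Type*} [Fintype α] [LinearOrder α] (S : Finset α)

theorem card_compl_map_embedding (g : {a // a ∉ S} ↪ α) : #(univ.map g)ᶜ = #S := by
  rw [card_compl, card_map, card_univ, Fintype.card_subtype_compl, Fintype.card_coe]
  have := S.card_le_univ
  omega

noncomputable def antiExtend (g : {a // a ∉ S} ↪ α) : Perm α :=
  subtypeCongr
    (((S.orderIsoOfFin rfl).symm.toEquiv.trans Fin.revPerm).trans
      ((univ.map g)ᶜ.orderIsoOfFin (card_compl_map_embedding S g)).toEquiv)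
    ((ofInjective g g.injective).trans (subtypeEquivRight fun b => by simp))

theorem antiExtend_apply_of_notMem (g : {a // a ∉ S} ↪ α) {a : α} (ha : a ∉ S) :
    antiExtend S g a = g ⟨a, ha⟩ := by
  simp [antiExtend, subtypeCongr, sumCompl_symm_apply_of_neg ha]

theorem antiExtend_apply_of_mem (g : {a // a ∉ S} ↪ α) {a : α} (ha : a ∈ S) :
    antiExtend S g a = (univ.map g)ᶜ.orderEmbOfFin (card_compl_map_embedding S g)
      ((S.orderIsoOfFin rfl).symm ⟨a, ha⟩).rev := by
  simp [antiExtend, subtypeCongr, sumCompl_symm_apply_of_pos ha]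

theorem strictAntiOn_antiExtend (g : {a // a ∉ S} ↪ α) : StrictAntiOn (antiExtend S g) S := by
  intro a ha b hb hab
  rw [antiExtend_apply_of_mem S g ha, antiExtend_apply_of_mem S g hb, OrderEmbedding.lt_iff_lt,
    Fin.rev_lt_rev, OrderIso.lt_iff_lt]
  exact hab

noncomputable def strictAntiOnEquivEmbedding :
    {τ : Perm α // StrictAntiOn τ S} ≃ ({a // a ∉ S} ↪ α) where
  toFun τ := (Function.Embedding.subtype _).trans τ.1.toEmbedding
  invFun g := ⟨antiExtend S g, strictAntiOn_antiExtend S g⟩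
  left_inv := by
    rintro ⟨τ, hτ⟩
    set g : {a // a ∉ S} ↪ α := (Function.Embedding.subtype _).trans τ.toEmbedding
    -- a strictly monotone enumeration of the values missed by `g` is unique
    have hsorted : ⇑((univ.map g)ᶜ.orderEmbOfFin (card_compl_map_embedding S g)) =
        fun j => τ (S.orderEmbOfFin rfl j.rev) := by
      refine (orderEmbOfFin_unique _ (fun j => ?_) fun i j hij => ?_).symm
      · simp [g, τ.injective.eq_iff]
      · exact hτ (orderEmbOfFin_mem _ _ _) (orderEmbOfFin_mem _ _ _)
          ((S.orderEmbOfFin rfl).lt_iff_lt.2 (Fin.rev_lt_rev.2 hij))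
    refine Subtype.ext <| Equiv.ext fun a => show antiExtend S g a = τ a from ?_
    by_cases ha : a ∈ S
    · rw [antiExtend_apply_of_mem S g ha, hsorted]
      simp [← coe_orderIsoOfFin_apply]
    · simp [antiExtend_apply_of_notMem S g ha, g]
  right_inv g := by
    ext a
    simp [antiExtend_apply_of_notMem S g a.2]

theorem card_strictAntiOn :
    Nat.card {τ : Perm α // StrictAntiOn τ S} =
      (Fintype.card α).descFactorial (Fintype.card α - #S) := by
  rw [Nat.card_congr (strictAntiOnEquivEmbedding S), Nat.card_eq_fintype_card,
    Fintype.card_embedding_eq, Fintype.card_subtype_compl, Fintype.card_coe]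

end StrictAntiPerms

theorem Fin.card_filter_le_val {m : ℕ} (t : ℕ) : #{i : Fin m | t ≤ (i : ℕ)} = m - t := by
  have := Fin.card_filter_val_lt (n := m) (m := t)
  have hlt := card_filter_add_card_filter_not (s := univ) (fun i : Fin m => (i : ℕ) < t)
  simp only [not_lt, card_univ, Fintype.card_fin] at hlt
  omega

theorem descFactorial_add_eq_choose_mul {a b j : ℕ} (hj : j ≤ b) :
    (a + b).descFactorial (a + j) = (a + b).choose b * a ! * (j ! * b.choose j) := by
  apply Nat.eq_of_mul_eq_mul_left (Nat.factorial_pos (b - j))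
  calc (b - j)! * (a + b).descFactorial (a + j) = (a + b)! := by
        rw [← Nat.factorial_mul_descFactorial (by omega : a + j ≤ a + b)]
        congr 2
        omega
    _ = (a + b).choose b * b ! * a ! := by
        simpa using (Nat.choose_mul_factorial_mul_factorial (Nat.le_add_left b a)).symm
    _ = (a + b).choose b * (b.choose j * j ! * (b - j)!) * a ! := by
        rw [Nat.choose_mul_factorial_mul_factorial hj]
    _ = (b - j)! * ((a + b).choose b * a ! * (j ! * b.choose j)) := by ring

theorem sum_choose_mul_descFactorial {m t : ℕ} (ht : t ≤ m) (k : ℕ) :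
    ∑ s ∈ range (m - t + 1), (m - t).choose s * (k ^ (m - t - s) * m.descFactorial (m - s)) =
      m.choose (m - t) * t ! * ∑ j ∈ range (m - t + 1), j ! * k ^ j * (m - t).choose j ^ 2 := by
  obtain ⟨b, rfl⟩ := Nat.exists_eq_add_of_le ht
  rw [Nat.add_sub_cancel_left, ← sum_range_reflect, mul_sum]
  refine sum_congr rfl fun j hj => ?_
  have hjb : j ≤ b := Nat.lt_succ_iff.1 (mem_range.1 hj)
  rw [Nat.add_sub_cancel, show t + b - (b - j) = t + j by omega, Nat.sub_sub_self hjb,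
    Nat.choose_symm hjb, descFactorial_add_eq_choose_mul hjb]
  ring

theorem sum_range_succ_eq_sum_Icc_reflect {M : Type*} [AddCommMonoid M] (f : ℕ → M) (n : ℕ) :
    ∑ t ∈ range (n + 1), f t = ∑ i ∈ Icc 1 (n + 1), f (n + 1 - i) := by
  refine sum_nbij' (fun t => n + 1 - t) (fun i => n + 1 - i) ?_ ?_ ?_ ?_
    fun a ha => congrArg f ?_
  all_goals (try intro a ha); simp only [mem_range, mem_Icc] at ha ⊢; omega

theorem spContains_two_iff {n r : ℕ} (p : SignedPerm 2 r) (x : SignedPerm n r) :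
    SPContains p x ↔ ∃ i j, i < j ∧ (p.1 0 < p.1 1 ↔ x.1 i < x.1 j) ∧
      x.2 i = p.2 0 ∧ x.2 j = p.2 1 := by
  have flip : ∀ {α : Type} [LinearOrder α] {a b : α}, a ≠ b → (b < a ↔ ¬ a < b) :=
    fun h => ⟨lt_asymm, fun h' => h.lt_or_gt.resolve_left h'⟩
  constructor
  · rintro ⟨f, hf, hord, hsign⟩
    exact ⟨f 0, f 1, hf Fin.zero_lt_one, hord 0 1, hsign 0, hsign 1⟩
  · rintro ⟨i, j, hij, hord, hi, hj⟩
    refine ⟨![i, j], by simp [Fin.strictMono_iff_lt_succ, hij], fun a b => ?_, fun a => ?_⟩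
    · have hp := p.1.injective.ne (show (0 : Fin 2) ≠ 1 by decide)
      have hx := x.1.injective.ne hij.ne
      fin_cases a <;> fin_cases b <;> simp [hord, flip hp, flip hx]
    · fin_cases a <;> simp [hi, hj]

-- The paper's signs `1` and `2` are the values `0` and `1` of `Fin (k + 2)`.
def Avoids {n k : ℕ} (x : SignedPerm n (k + 2)) : Prop :=
  ∀ i j, i < j → x.2 i = 0 → (x.2 j = 0 → x.1 j < x.1 i) ∧ (x.2 j = 1 → x.1 i < x.1 j)

theorem avoids_iff_not_spContains {n k : ℕ} (x : SignedPerm n (k + 2)) :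
    Avoids x ↔ ¬ SPContains ((1 : Perm (Fin 2)), ![0, 0]) x ∧
      ¬ SPContains (swap 0 1, ![0, 1]) x := by
  have hx : ∀ i j, i < j → (x.1 j ≤ x.1 i ↔ x.1 j < x.1 i) :=
    fun i j hij => (x.1.injective.ne hij.ne').le_iff_lt
  simp only [Avoids, spContains_two_iff, Perm.coe_one, id_eq, Fin.zero_lt_one, true_iff,
    Matrix.cons_val_zero, Matrix.cons_val_one, swap_apply_left, swap_apply_right,
    Fin.not_lt_zero, false_iff, not_exists, not_and, not_lt]
  grind

section Insertion

variable {m r : ℕ}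

def permInsertMax (t : Fin (m + 1)) :
    Perm (Fin m) ≃ {σ : Perm (Fin (m + 1)) // σ t = Fin.last m} :=
  ((equivCongr (.refl _) (finSuccAboveEquiv (Fin.last m))).trans
    (optionSubtype (Fin.last m)).symm).trans
    ((equivCongr (finSuccEquiv' t).symm (.refl _)).subtypeEquiv fun _ => by
      simp [finSuccEquiv'_at])

@[simp] lemma permInsertMax_apply_succAbove (t : Fin (m + 1)) (τ : Perm (Fin m)) (i : Fin m) :
    (permInsertMax t τ : Perm (Fin (m + 1))) (t.succAbove i) = (τ i).castSucc := by
  simp [permInsertMax, finSuccAboveEquiv_apply]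

def insertMax (t : Fin (m + 1)) :
    Fin r × SignedPerm m r ≃ {x : SignedPerm (m + 1) r // x.1 t = Fin.last m} :=
  ((prodAssoc _ _ _).symm.trans <| ((prodComm _ _).prodCongr (.refl _)).trans <|
    (prodAssoc _ _ _).trans <| (permInsertMax t).prodCongr
      (Fin.insertNthEquiv (fun _ => Fin r) t)).trans prodSubtypeFstEquivSubtypeProd.symm

variable (t : Fin (m + 1)) (s : Fin r) (y : SignedPerm m r) (i : Fin m)

@[simp] lemma insertMax_fst_apply_self : (insertMax t (s, y)).1.1 t = Fin.last m :=
  (insertMax t (s, y)).2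

@[simp] lemma insertMax_fst_apply_succAbove :
    (insertMax t (s, y)).1.1 (t.succAbove i) = (y.1 i).castSucc := by
  simp [insertMax, prodSubtypeFstEquivSubtypeProd]

@[simp] lemma insertMax_snd_apply_self : (insertMax t (s, y)).1.2 t = s := by
  simp [insertMax, prodSubtypeFstEquivSubtypeProd]

@[simp] lemma insertMax_snd_apply_succAbove :
    (insertMax t (s, y)).1.2 (t.succAbove i) = y.2 i := by
  simp [insertMax, prodSubtypeFstEquivSubtypeProd]

end Insertion

section AvoidsInsertMax

variable {m k : ℕ} (t : Fin (m + 1)) (y : SignedPerm m (k + 2))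

def SignsAdmissible (d : Fin m → Fin (k + 2)) : Prop :=
  (∀ i : Fin m, i < (t : ℕ) → d i ≠ 0) ∧ ∀ i : Fin m, (t : ℕ) ≤ i → d i ≠ 1

instance (d : Fin m → Fin (k + 2)) : Decidable (SignsAdmissible t d) := by
  unfold SignsAdmissible; infer_instance

def zeroSet (d : Fin m → Fin (k + 2)) : Finset (Fin m) := {i | d i = 0}

theorem avoids_insertMax_of_ne_zero {s : Fin (k + 2)} (hs : s ≠ 0) :
    Avoids (insertMax t (s, y)).1 ↔ Avoids y := by
  simp [Avoids, Fin.forall_iff_succAbove t, hs]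

theorem avoids_insertMax_zero_iff :
    Avoids (insertMax t (0, y)).1 ↔ Avoids y ∧ SignsAdmissible t y.2 := by
  have hlast (a : Fin m) : ¬ Fin.last m < a.castSucc := (Fin.castSucc_lt_last a).not_gt
  have hlt (i : Fin m) : i.castSucc < t ↔ (i : ℕ) < t := Fin.lt_def
  have hle (i : Fin m) : t ≤ i.castSucc ↔ (t : ℕ) ≤ i := Fin.le_def
  simp [Avoids, SignsAdmissible, Fin.forall_iff_succAbove t, hlast, hlt, hle,
    Fin.lt_succAbove_iff_le_castSucc, Fin.succAbove_lt_iff_castSucc_lt, forall_and]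
  tauto

theorem avoids_iff_strictAntiOn (h : SignsAdmissible t y.2) :
    Avoids y ↔ StrictAntiOn y.1 (zeroSet y.2) := by
  simp only [Avoids, StrictAntiOn, zeroSet, coe_filter, mem_univ, true_and]
  refine ⟨fun hy a ha b hb hab => (hy a b hab ha).1 hb,
    fun hy i j hij hi => ⟨fun hj => hy hi hj hij, fun hj => absurd hj (h.2 j ?_)⟩⟩
  exact (not_lt.1 fun hit => h.1 i hit hi).trans (Fin.lt_def.1 hij).le

end AvoidsInsertMax

section Counting

variable {m k : ℕ}

theorem card_signsAdmissible_zeroSet_eq (t : Fin (m + 1)) {T : Finset (Fin m)}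
    (hT : ∀ i ∈ T, (t : ℕ) ≤ i) :
    #{d : Fin m → Fin (k + 2) | SignsAdmissible t d ∧ zeroSet d = T} =
      (k + 1) ^ (t : ℕ) * k ^ (m - t - #T) := by
  set A : Fin m → Finset (Fin (k + 2)) := fun i =>
    if i ∈ T then {0} else if (i : ℕ) < t then {0}ᶜ else {0, 1}ᶜ
  have hA : ({d | SignsAdmissible t d ∧ zeroSet d = T} : Finset (Fin m → Fin (k + 2))) =
      Fintype.piFinset A := by
    ext d
    simp only [SignsAdmissible, zeroSet, Finset.ext_iff, mem_filter, mem_univ, true_and,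
      Fintype.mem_piFinset, A, ← forall_and]
    refine forall_congr' fun i => ?_
    have hTi := hT i
    split_ifs <;> simp_all [and_comm]
  have hlow : #{i : Fin m | i ∉ T ∧ (i : ℕ) < t} = t := by
    calc #{i : Fin m | i ∉ T ∧ (i : ℕ) < t} = #{i : Fin m | (i : ℕ) < t} := by
          congr 1
          ext i
          simp only [mem_filter, mem_univ, true_and, and_iff_right_iff_imp]
          exact fun hlt hi => (hT i hi).not_gt hlt
      _ = t := by rw [Fin.card_filter_val_lt]; omega
  have hhigh : #{i : Fin m | i ∉ T ∧ ¬ (i : ℕ) < t} = m - t - #T := by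
    rw [← Fin.card_filter_le_val (m := m) t, ← card_sdiff_of_subset]
    · congr 1
      ext i
      simp [and_comm]
    · intro i hi
      simpa using hT i hi
  rw [hA, Fintype.card_piFinset]
  simp only [A, apply_ite card, card_singleton, card_compl, Fintype.card_fin,
    card_pair zero_ne_one, prod_const_one, one_mul, prod_ite, prod_const, filter_filter, hlow,
    hhigh]
  rfl

theorem sum_signsAdmissible (t : Fin (m + 1)) (f : ℕ → ℕ) :
    ∑ d : Fin m → Fin (k + 2) with SignsAdmissible t d, f #(zeroSet d) =
      ∑ s ∈ range (m - t + 1),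
        (m - t).choose s * ((k + 1) ^ (t : ℕ) * k ^ (m - t - s) * f s) := by
  set highs : Finset (Fin m) := {i | (t : ℕ) ≤ i}
  have hzero : ∀ d ∈ ({d | SignsAdmissible t d} : Finset (Fin m → Fin (k + 2))),
      zeroSet d ∈ highs.powerset := by
    intro d hd
    rw [mem_powerset]
    intro i hi
    simp only [zeroSet, highs, mem_filter, mem_univ, true_and] at hd hi ⊢
    exact not_lt.1 fun hit => hd.1 i hit hi
  calc _ = ∑ T ∈ highs.powerset, ∑ d : Fin m → Fin (k + 2) with
        SignsAdmissible t d ∧ zeroSet d = T, f #(zeroSet d) := by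
        rw [← sum_fiberwise_of_maps_to hzero]
        simp only [filter_filter]
    _ = ∑ T ∈ highs.powerset, (k + 1) ^ (t : ℕ) * k ^ (m - t - #T) * f #T := by
        refine sum_congr rfl fun T hT => ?_
        rw [sum_congr rfl fun d hd => by rw [(mem_filter.1 hd).2.2], sum_const, smul_eq_mul,
          card_signsAdmissible_zeroSet_eq t fun i hi => by simpa [highs] using mem_powerset.1 hT hi]
    _ = _ := by
        rw [sum_powerset_apply_card (fun s => (k + 1) ^ (t : ℕ) * k ^ (m - t - s) * f s),
          Fin.card_filter_le_val]
        simp only [smul_eq_mul]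

theorem card_signsAdmissible_strictAntiOn (t : Fin (m + 1)) :
    Nat.card {y : SignedPerm m (k + 2) //
        SignsAdmissible t y.2 ∧ StrictAntiOn y.1 (zeroSet y.2)} =
      ∑ d : Fin m → Fin (k + 2) with SignsAdmissible t d,
        m.descFactorial (m - #(zeroSet d)) := by
  have e : {y : SignedPerm m (k + 2) //
        SignsAdmissible t y.2 ∧ StrictAntiOn y.1 (zeroSet y.2)} ≃
      Σ d : Fin m → Fin (k + 2),
        {τ : Perm (Fin m) // SignsAdmissible t d ∧ StrictAntiOn τ (zeroSet d)} :=
    ((prodComm (Perm (Fin m)) (Fin m → Fin (k + 2))).subtypeEquiv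
      (q := fun dτ => SignsAdmissible t dτ.1 ∧ StrictAntiOn dτ.2 (zeroSet dτ.1))
      fun _ => Iff.rfl).trans (subtypeProdEquivSigmaSubtype
        fun d (τ : Perm (Fin m)) => SignsAdmissible t d ∧ StrictAntiOn τ (zeroSet d))
  rw [Nat.card_congr e, Nat.card_sigma, sum_filter]
  refine sum_congr rfl fun d _ => ?_
  split_ifs with hd
  · simp only [hd, true_and, card_strictAntiOn, Fintype.card_fin]
  · simp [hd]

theorem card_avoids_insertMax_zero (t : Fin (m + 1)) :
    Nat.card {y : SignedPerm m (k + 2) // Avoids (insertMax t (0, y)).1} =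
      (k + 1) ^ (t : ℕ) * (m.choose (m - t) * (t : ℕ)! *
        ∑ j ∈ range (m - t + 1), j ! * k ^ j * (m - t).choose j ^ 2) := by
  have h (y : SignedPerm m (k + 2)) : Avoids (insertMax t (0, y)).1 ↔
      SignsAdmissible t y.2 ∧ StrictAntiOn y.1 (zeroSet y.2) := by
    rw [avoids_insertMax_zero_iff, and_comm]
    exact and_congr_right (avoids_iff_strictAntiOn t y)
  rw [Nat.card_congr (subtypeEquivRight h), card_signsAdmissible_strictAntiOn,
    sum_signsAdmissible t fun s => m.descFactorial (m - s),
    ← sum_choose_mul_descFactorial (Nat.lt_succ_iff.1 t.2), mul_sum]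
  exact sum_congr rfl fun s _ => by ring

theorem card_eq_sum_card_apply_eq_last {r : ℕ} (P : SignedPerm (m + 1) r → Prop) :
    Nat.card {x // P x} =
      ∑ t : Fin (m + 1), Nat.card {x : SignedPerm (m + 1) r // x.1 t = Fin.last m ∧ P x} := by
  rw [← Nat.card_congr (sigmaFiberEquiv fun x : {x // P x} => x.1.1.symm (Fin.last m)),
    Nat.card_sigma]
  refine sum_congr rfl fun t _ => Nat.card_congr ?_
  exact (subtypeSubtypeEquivSubtypeInter P (fun x => x.1.symm (Fin.last m) = t)).trans
    (subtypeEquivRight fun x => by rw [symm_apply_eq, eq_comm, and_comm])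

theorem card_avoids_apply_eq_last (t : Fin (m + 1)) :
    Nat.card {x : SignedPerm (m + 1) (k + 2) // x.1 t = Fin.last m ∧ Avoids x} =
      (k + 1) * Nat.card {y : SignedPerm m (k + 2) // Avoids y} +
        Nat.card {y : SignedPerm m (k + 2) // Avoids (insertMax t (0, y)).1} := by
  rw [← Nat.card_congr (((insertMax t).subtypeEquiv fun _ => Iff.rfl).trans
      (subtypeSubtypeEquivSubtypeInter
        (fun x : SignedPerm (m + 1) (k + 2) => x.1 t = Fin.last m) Avoids)),
    Nat.card_congr (subtypeProdEquivSigmaSubtype fun s y => Avoids (insertMax t (s, y)).1),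
    Nat.card_sigma, Fin.sum_univ_succ]
  simp only [avoids_insertMax_of_ne_zero t _ (Fin.succ_ne_zero _), sum_const, card_univ,
    Fintype.card_fin, smul_eq_mul]
  rw [add_comm]

end Counting

/-- with `p_n = |E_n^r((1^(1),2^(1)), (2^(1),1^(2)))|` and
`d_{r-1}(m) = Σ_j j!(r-2)^j C(m,j)^2`, the recurrence
`p_n = n(r-1)p_{n-1} + Σ_{i=1}^n C(n-1,i-1)(n-i)!(r-1)^{n-i} d_{r-1}(i-1)`
holds for `n ≥ 1`, with `p_0 = 1`. -/
theorem recurrence_case4 (r : ℕ) (hr : 2 ≤ r) (p : ℕ → ℕ)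
    (hp : ∀ n, p n = Nat.card {x : SignedPerm n r //
        ¬ SPContains ((1 : Equiv.Perm (Fin 2)),
            ![(⟨0, by omega⟩ : Fin r), ⟨0, by omega⟩]) x ∧
        ¬ SPContains (Equiv.swap 0 1,
            ![(⟨0, by omega⟩ : Fin r), ⟨1, hr⟩]) x}) :
    p 0 = 1 ∧ ∀ n, 1 ≤ n →
      p n = n * (r - 1) * p (n - 1) +
        ∑ i ∈ Finset.Icc 1 n,
          (n - 1).choose (i - 1) * (n - i).factorial * (r - 1) ^ (n - i) *
            (∑ j ∈ Finset.range ((i - 1) + 1),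
              j.factorial * (r - 2) ^ j * ((i - 1).choose j) ^ 2) := by
  obtain ⟨k, rfl⟩ : ∃ k, r = k + 2 := ⟨r - 2, by omega⟩
  have hp_avoids (n : ℕ) : p n = Nat.card {x : SignedPerm n (k + 2) // Avoids x} := by
    simp only [hp n, Fin.zero_eta, Fin.mk_one, avoids_iff_not_spContains]
  refine ⟨by simp [hp_avoids, Avoids], fun n hn => ?_⟩
  obtain ⟨m, rfl⟩ := Nat.exists_eq_add_of_le' hn
  rw [hp_avoids, hp_avoids, card_eq_sum_card_apply_eq_last]
  simp only [card_avoids_apply_eq_last, card_avoids_insertMax_zero, sum_add_distrib, sum_const,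
    card_univ, Fintype.card_fin, smul_eq_mul, Nat.add_sub_cancel, show k + 2 - 1 = k + 1 from rfl]
  rw [Fin.sum_univ_eq_sum_range (fun t => (k + 1) ^ t * (m.choose (m - t) * t ! *
      ∑ j ∈ range (m - t + 1), j ! * k ^ j * (m - t).choose j ^ 2)),
    sum_range_succ_eq_sum_Icc_reflect, mul_assoc]
  refine congrArg _ (sum_congr rfl fun i hi => ?_)
  rw [show m - (m + 1 - i) = i - 1 by simp at hi; omega]
  ring
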